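/- Let p ≥ 5 and a, z ∈ ℂ. Then | |a+z|^{p+1} - |a|^{p+1} - (p+1)Re(āz)|a|^{p-1} - ((p+1)/2)|z|²|a|^{p-1} - ((p+1)(p-1)/2)(Re(āz))²|a|^{p-3} | ≤ C(1+|a|)^{p-2}|z|³ for |z| ≤ 1, with C depending only on p. -/

import Mathlib

/-!
Writing `s = ‖u‖²`, the density is `φ(s) = s ^ ((p + 1) / 2)` and the increment is
`s - ‖a‖² = 2⟪a, z⟫ + ‖z‖²`, of size at most `2 (1 + ‖a‖) ‖z‖`. For `p ≥ 5` the exponent is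
at least `3`, so `φ'''` is bounded by a constant times `(1 + ‖a‖) ^ (p - 5)` on
`[0, (1 + ‖a‖)²]` and the second-order Taylor remainder of `φ` is `O((1 + ‖a‖) ^ (p - 2) ‖z‖³)`.
Expanding the square of the increment, the quadratic term differs from the one in the
statement only by `‖a‖ ^ (p - 3) ‖z‖² (4⟪a, z⟫ + ‖z‖²)`, which is of the same order.
-/

open Set

lemma abs_sub_le_mul_abs_sub_pow_succ {g g' : ℝ → ℝ} {s : Set ℝ} (hs : Convex ℝ s)
    (hg : ∀ x, HasDerivAt g (g' x) x) {M x₀ y : ℝ} {n : ℕ} (hM : 0 ≤ M)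
    (hg' : ∀ x ∈ s, |g' x| ≤ M * |x - x₀| ^ n) (hx₀ : x₀ ∈ s) (hy : y ∈ s) :
    |g y - g x₀| ≤ M * |y - x₀| ^ (n + 1) := by
  have hsub : uIcc x₀ y ⊆ s := hs.ordConnected.uIcc_subset hx₀ hy
  have hg'_le : ∀ u ∈ uIcc x₀ y, ‖g' u‖ ≤ M * |y - x₀| ^ n := fun u hu =>
    (hg' u (hsub hu)).trans <| mul_le_mul_of_nonneg_left
      (pow_le_pow_left₀ (abs_nonneg _) (abs_sub_left_of_mem_uIcc hu) n) hM
  simpa only [Real.norm_eq_abs, pow_succ, mul_assoc] using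
    (convex_uIcc x₀ y).norm_image_sub_le_of_norm_hasDerivWithin_le
      (fun u _ => (hg u).hasDerivWithinAt) hg'_le left_mem_uIcc right_mem_uIcc

lemma abs_taylor_two_le {f f' f'' f''' : ℝ → ℝ} {s : Set ℝ} (hs : Convex ℝ s)
    (hf : ∀ x, HasDerivAt f (f' x) x) (hf' : ∀ x, HasDerivAt f' (f'' x) x)
    (hf'' : ∀ x, HasDerivAt f'' (f''' x) x) {M x₀ y : ℝ} (hM : ∀ x ∈ s, |f''' x| ≤ M)
    (hx₀ : x₀ ∈ s) (hy : y ∈ s) :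
    |f y - f x₀ - f' x₀ * (y - x₀) - f'' x₀ * (y - x₀) ^ 2 / 2| ≤ M * |y - x₀| ^ 3 := by
  have hM₀ : 0 ≤ M := (abs_nonneg _).trans (hM x₀ hx₀)
  have hid : ∀ x, HasDerivAt (fun x => x - x₀) 1 x := fun x => (hasDerivAt_id x).sub_const x₀
  have h₁ : ∀ x ∈ s, |f'' x - f'' x₀| ≤ M * |x - x₀| ^ 1 := fun x hx =>
    abs_sub_le_mul_abs_sub_pow_succ (n := 0) hs hf'' hM₀ (by simpa using hM) hx₀ hx
  have h₂ : ∀ x ∈ s, |f' x - f' x₀ - f'' x₀ * (x - x₀)| ≤ M * |x - x₀| ^ 2 := fun x hx => by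
    have := abs_sub_le_mul_abs_sub_pow_succ (g := fun x => f' x - f'' x₀ * (x - x₀)) (n := 1) hs
      (fun x => (hf' x).sub ((hid x).const_mul (f'' x₀))) hM₀
      (fun x hx => by simpa using h₁ x hx) hx₀ hx
    convert this using 2
    ring
  have := abs_sub_le_mul_abs_sub_pow_succ (n := 2) hs
    (g := fun x => f x - f' x₀ * (x - x₀) - f'' x₀ * (x - x₀) ^ 2 / 2)
    (fun x => ((hf x).sub ((hid x).const_mul (f' x₀))).sub
      ((((hid x).pow 2).const_mul (f'' x₀)).div_const 2)) hM₀
    (fun x hx => by convert h₂ x hx using 2; ring) hx₀ hy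
  convert this using 2
  ring

lemma hasDerivAt_const_mul_rpow (c : ℝ) {q : ℝ} (hq : 1 ≤ q) (x : ℝ) :
    HasDerivAt (fun x => c * x ^ q) (c * q * x ^ (q - 1)) x := by
  simpa only [mul_assoc] using (Real.hasDerivAt_rpow_const (Or.inr hq)).const_mul c

lemma abs_rpow_taylor_two_le {q R x₀ y : ℝ} (hq : 3 ≤ q) (hx₀ : x₀ ∈ Icc 0 R)
    (hy : y ∈ Icc 0 R) :
    |y ^ q - x₀ ^ q - q * x₀ ^ (q - 1) * (y - x₀) - q * (q - 1) * x₀ ^ (q - 2) * (y - x₀) ^ 2 / 2|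
      ≤ q * (q - 1) * (q - 2) * R ^ (q - 3) * |y - x₀| ^ 3 := by
  have hf x : HasDerivAt (fun x => x ^ q) (q * x ^ (q - 1)) x :=
    Real.hasDerivAt_rpow_const (Or.inr (by linarith))
  have hf' x : HasDerivAt (fun x => q * x ^ (q - 1)) (q * (q - 1) * x ^ (q - 2)) x := by
    simpa only [sub_sub, one_add_one_eq_two] using
      hasDerivAt_const_mul_rpow q (q := q - 1) (by linarith) x
  have hf'' x : HasDerivAt (fun x => q * (q - 1) * x ^ (q - 2))
      (q * (q - 1) * (q - 2) * x ^ (q - 3)) x := by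
    simpa only [sub_sub, two_add_one_eq_three] using
      hasDerivAt_const_mul_rpow (q * (q - 1)) (q := q - 2) (by linarith) x
  refine abs_taylor_two_le (convex_Icc 0 R) hf hf' hf'' (fun x hx => ?_) hx₀ hy
  have hc : 0 ≤ q * (q - 1) * (q - 2) :=
    mul_nonneg (mul_nonneg (by linarith) (by linarith)) (by linarith)
  rw [abs_of_nonneg (mul_nonneg hc (Real.rpow_nonneg hx.1 _))]
  exact mul_le_mul_of_nonneg_left (Real.rpow_le_rpow hx.1 hx.2 (by linarith)) hc

lemma sq_rpow_div_two {t : ℝ} (ht : 0 ≤ t) (s : ℝ) : (t ^ 2) ^ (s / 2) = t ^ s := by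
  rw [← Real.rpow_natCast_mul ht]
  congr 1
  push_cast
  ring

section InnerProductSpace

variable {E : Type*} [SeminormedAddCommGroup E] [InnerProductSpace ℝ E]

open scoped RealInnerProductSpace

lemma abs_mul_inner_add_sq_norm_le {c : ℝ} (hc : 1 ≤ c) (a : E) {z : E} (hz : ‖z‖ ≤ 1) :
    |c * ⟪a, z⟫ + ‖z‖ ^ 2| ≤ c * (1 + ‖a‖) * ‖z‖ := by
  have hinner : |c * ⟪a, z⟫| ≤ c * (‖a‖ * ‖z‖) := by
    rw [abs_mul, abs_of_nonneg (by linarith)]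
    exact mul_le_mul_of_nonneg_left (abs_real_inner_le_norm a z) (by linarith)
  have hz₀ := norm_nonneg z
  calc |c * ⟪a, z⟫ + ‖z‖ ^ 2| ≤ |c * ⟪a, z⟫| + ‖z‖ ^ 2 :=
        (abs_add_le _ _).trans_eq (by rw [abs_sq])
    _ ≤ c * (1 + ‖a‖) * ‖z‖ := by nlinarith

lemma abs_norm_add_rpow_sub_taylor_sq_le {p : ℝ} (hp : 5 ≤ p) (a : E) {z : E} (hz : ‖z‖ ≤ 1) :
    |‖a + z‖ ^ (p + 1) - ‖a‖ ^ (p + 1) - (p + 1) / 2 * ‖a‖ ^ (p - 1) * (2 * ⟪a, z⟫ + ‖z‖ ^ 2)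
        - (p + 1) / 2 * ((p - 1) / 2) * ‖a‖ ^ (p - 3) * (2 * ⟪a, z⟫ + ‖z‖ ^ 2) ^ 2 / 2|
      ≤ (p + 1) / 2 * ((p - 1) / 2) * ((p - 3) / 2) * (1 + ‖a‖) ^ (p - 5)
        * |2 * ⟪a, z⟫ + ‖z‖ ^ 2| ^ 3 := by
  have hsq : ‖a + z‖ ^ 2 - ‖a‖ ^ 2 = 2 * ⟪a, z⟫ + ‖z‖ ^ 2 := by rw [norm_add_sq_real]; ring
  have hmem_a : ‖a‖ ^ 2 ∈ Icc 0 ((1 + ‖a‖) ^ 2) := ⟨by positivity, by gcongr; linarith⟩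
  have hmem_az : ‖a + z‖ ^ 2 ∈ Icc 0 ((1 + ‖a‖) ^ 2) :=
    ⟨by positivity, by gcongr; exact (norm_add_le a z).trans (by linarith)⟩
  have htaylor := abs_rpow_taylor_two_le (q := (p + 1) / 2) (by linarith) hmem_a hmem_az
  rwa [hsq, show (p + 1) / 2 - 1 = (p - 1) / 2 by ring, show (p + 1) / 2 - 2 = (p - 3) / 2 by ring,
    show (p + 1) / 2 - 3 = (p - 5) / 2 by ring, sq_rpow_div_two (norm_nonneg _),
    sq_rpow_div_two (norm_nonneg _), sq_rpow_div_two (norm_nonneg _),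
    sq_rpow_div_two (norm_nonneg _), sq_rpow_div_two (by positivity)] at htaylor

theorem abs_norm_add_rpow_sub_taylor_two_le {p : ℝ} (hp : 5 ≤ p) (a : E) {z : E}
    (hz : ‖z‖ ≤ 1) :
    |‖a + z‖ ^ (p + 1) - ‖a‖ ^ (p + 1) - (p + 1) * ⟪a, z⟫ * ‖a‖ ^ (p - 1)
        - ((p + 1) / 2) * ‖z‖ ^ 2 * ‖a‖ ^ (p - 1)
        - ((p + 1) * (p - 1) / 2) * ⟪a, z⟫ ^ 2 * ‖a‖ ^ (p - 3)|
      ≤ (p + 1) * (p - 1) * (2 * p - 5) / 2 * (1 + ‖a‖) ^ (p - 2) * ‖z‖ ^ 3 := by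
  have htaylor := abs_norm_add_rpow_sub_taylor_sq_le hp a hz
  set r := ⟪a, z⟫
  set A := 1 + ‖a‖
  have hA : 0 < A := by positivity
  have hremainder : A ^ (p - 5) * |2 * r + ‖z‖ ^ 2| ^ 3 ≤ 8 * A ^ (p - 2) * ‖z‖ ^ 3 :=
    calc _ ≤ A ^ (p - 5) * (2 * A * ‖z‖) ^ 3 := by
          gcongr
          exact abs_mul_inner_add_sq_norm_le (by norm_num) a hz
      _ = 8 * (A ^ (p - 5) * A ^ 3) * ‖z‖ ^ 3 := by ring
      _ = 8 * A ^ (p - 2) * ‖z‖ ^ 3 := by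
          rw [← Real.rpow_add_natCast hA.ne' _ 3, Nat.cast_ofNat, show p - 5 + 3 = p - 2 by ring]
  have hextra : |‖a‖ ^ (p - 3) * ‖z‖ ^ 2 * (4 * r + ‖z‖ ^ 2)| ≤ 4 * A ^ (p - 2) * ‖z‖ ^ 3 :=
    calc _ = ‖a‖ ^ (p - 3) * ‖z‖ ^ 2 * |4 * r + ‖z‖ ^ 2| := by
          rw [abs_mul, abs_of_nonneg (by positivity)]
      _ ≤ A ^ (p - 3) * ‖z‖ ^ 2 * (4 * A * ‖z‖) := by
          gcongr
          · linarith
          · exact le_add_of_nonneg_left zero_le_one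
          · exact abs_mul_inner_add_sq_norm_le (by norm_num) a hz
      _ = 4 * (A ^ (p - 3) * A) * ‖z‖ ^ 3 := by ring
      _ = 4 * A ^ (p - 2) * ‖z‖ ^ 3 := by
          rw [← Real.rpow_add_one hA.ne', show p - 3 + 1 = p - 2 by ring]
  have hc : 0 ≤ (p + 1) * (p - 1) / 8 :=
    div_nonneg (mul_nonneg (by linarith) (by linarith)) (by norm_num)
  have hsplit : ‖a + z‖ ^ (p + 1) - ‖a‖ ^ (p + 1) - (p + 1) * r * ‖a‖ ^ (p - 1)
        - (p + 1) / 2 * ‖z‖ ^ 2 * ‖a‖ ^ (p - 1) - (p + 1) * (p - 1) / 2 * r ^ 2 * ‖a‖ ^ (p - 3)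
      = (‖a + z‖ ^ (p + 1) - ‖a‖ ^ (p + 1) - (p + 1) / 2 * ‖a‖ ^ (p - 1) * (2 * r + ‖z‖ ^ 2)
          - (p + 1) / 2 * ((p - 1) / 2) * ‖a‖ ^ (p - 3) * (2 * r + ‖z‖ ^ 2) ^ 2 / 2)
        + (p + 1) * (p - 1) / 8 * (‖a‖ ^ (p - 3) * ‖z‖ ^ 2 * (4 * r + ‖z‖ ^ 2)) := by
    ring
  calc _ ≤ (p + 1) * (p - 1) / 8 * (p - 3) * (A ^ (p - 5) * |2 * r + ‖z‖ ^ 2| ^ 3)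
        + (p + 1) * (p - 1) / 8 * |‖a‖ ^ (p - 3) * ‖z‖ ^ 2 * (4 * r + ‖z‖ ^ 2)| := by
        rw [hsplit]
        refine (abs_add_le _ _).trans (add_le_add (htaylor.trans_eq (by ring)) ?_)
        rw [abs_mul, abs_of_nonneg hc]
    _ ≤ (p + 1) * (p - 1) / 8 * (p - 3) * (8 * A ^ (p - 2) * ‖z‖ ^ 3)
        + (p + 1) * (p - 1) / 8 * (4 * A ^ (p - 2) * ‖z‖ ^ 3) := by
        gcongr
        exact mul_nonneg hc (by linarith)
    _ = _ := by ring

end InnerProductSpace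

/-- second-order Taylor expansion of `|u|^{p+1}` around `a`: for `p ≥ 5`
there is `C > 0` such that for `|z| ≤ 1`,
`| |a+z|^{p+1} - |a|^{p+1} - (p+1)Re(āz)|a|^{p-1} - ((p+1)/2)|z|²|a|^{p-1}
  - ((p+1)(p-1)/2)(Re(āz))²|a|^{p-3} | ≤ C (1+|a|)^{p-2} |z|³`. -/
theorem potential_taylor_second_order (p : ℝ) (hp : 5 ≤ p) :
    ∃ C > 0, ∀ a z : ℂ, ‖z‖ ≤ 1 →
      |‖a + z‖ ^ (p + 1) - ‖a‖ ^ (p + 1)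
        - (p + 1) * ((starRingEnd ℂ) a * z).re * ‖a‖ ^ (p - 1)
        - ((p + 1) / 2) * ‖z‖ ^ 2 * ‖a‖ ^ (p - 1)
        - ((p + 1) * (p - 1) / 2) * (((starRingEnd ℂ) a * z).re) ^ 2 * ‖a‖ ^ (p - 3)|
      ≤ C * (1 + ‖a‖) ^ (p - 2) * ‖z‖ ^ 3 := by
  refine ⟨(p + 1) * (p - 1) * (2 * p - 5) / 2,
    div_pos (mul_pos (mul_pos (by linarith) (by linarith)) (by linarith)) two_pos,
    fun a z hz => ?_⟩
  have hinner : ((starRingEnd ℂ) a * z).re = inner ℝ a z := by rw [Complex.inner, mul_comm]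
  rw [hinner]
  exact abs_norm_add_rpow_sub_taylor_two_le hp a hz
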